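/- If ρ is an entangled pure state on H₁ ⊗ H₂ (a rank-one projection that is not a product state), then its partial trace tr₂ ρ is a mixed state, i.e., (tr₂ ρ)² ≠ tr₂ ρ. -/

import Mathlib

open Matrix Finset
open scoped Kronecker ComplexOrder

def IsDensity {d : Type} [Fintype d] [DecidableEq d] (ρ : Matrix d d ℂ) : Prop :=
  ρ.PosSemidef ∧ ρ.trace = 1

noncomputable def ptr₂ {n m : ℕ} (ρ : Matrix (Fin n × Fin m) (Fin n × Fin m) ℂ) :
    Matrix (Fin n) (Fin n) ℂ :=
  Matrix.of fun i j => ∑ k : Fin m, ρ (i, k) (j, k)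

noncomputable def ptr₁ {n m : ℕ} (ρ : Matrix (Fin n × Fin m) (Fin n × Fin m) ℂ) :
    Matrix (Fin m) (Fin m) ℂ :=
  Matrix.of fun i j => ∑ k : Fin n, ρ (k, i) (k, j)

def SepState {n m : ℕ} (ρ : Matrix (Fin n × Fin m) (Fin n × Fin m) ℂ) : Prop :=
  ∃ (k : ℕ) (p : Fin k → ℝ) (a : Fin k → Matrix (Fin n) (Fin n) ℂ)
    (b : Fin k → Matrix (Fin m) (Fin m) ℂ),
    (∀ i, 0 ≤ p i) ∧ (∑ i, p i) = 1 ∧ (∀ i, IsDensity (a i) ∧ IsDensity (b i)) ∧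
    ρ = ∑ i, p i • (a i ⊗ₖ b i)

def Lam {n m : ℕ} (C₁ : Set (Matrix (Fin n) (Fin n) ℂ))
    (C₂ : Set (Matrix (Fin m) (Fin m) ℂ)) :
    Set (Matrix (Fin n × Fin m) (Fin n × Fin m) ℂ) :=
  convexHull ℝ {x | ∃ ρ₁ ∈ C₁, ∃ ρ₂ ∈ C₂, x = ρ₁ ⊗ₖ ρ₂}

noncomputable def LamTau {n m : ℕ} (C : Set (Matrix (Fin n × Fin m) (Fin n × Fin m) ℂ)) :
    Set (Matrix (Fin n × Fin m) (Fin n × Fin m) ℂ) :=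
  Lam (ptr₂ '' C) (ptr₁ '' C)

noncomputable def outer {d : Type} [Fintype d] (ψ : d → ℂ) : Matrix d d ℂ :=
  Matrix.of fun x y => ψ x * star (ψ y)

/-!
Let `M i k = ψ (i, k)` be the coefficient matrix of `ψ`; then `tr₂ |ψ⟩⟨ψ| = M Mᴴ` has trace
`‖ψ‖² = 1`. An idempotent matrix has trace equal to its rank, and `M Mᴴ` has the rank of `M`,
so a pure marginal forces `rank M = 1`, i.e. `M = u vᵀ` and `ψ = u ⊗ v` is a product.
-/

theorem Matrix.trace_eq_rank_of_isIdempotentElem {K ι : Type*} [Field K] [Fintype ι]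
    [DecidableEq ι] {A : Matrix ι ι K} (hA : IsIdempotentElem A) : A.trace = A.rank := by
  have hP := LinearMap.IsIdempotentElem.isProj_range (toLin' A) (hA.map toLinAlgEquiv')
  rw [← trace_toLin'_eq, hP.trace]
  rfl

theorem Matrix.exists_eq_vecMulVec_of_rank_le_one {K m n : Type*} [Field K] [Fintype n]
    {A : Matrix m n K} (hA : A.rank ≤ 1) : ∃ u v, A = vecMulVec u v := by
  obtain ⟨u, hu⟩ := finrank_le_one_iff.mp hA
  choose c hc using fun k => hu ⟨A.col k, by
    rw [range_mulVecLin]; exact Submodule.subset_span ⟨k, rfl⟩⟩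
  refine ⟨u, c, ?_⟩
  ext i k
  simpa [vecMulVec_apply, mul_comm] using (congrFun (congrArg Subtype.val (hc k)) i).symm

theorem trace_ptr₂ {n m : ℕ} (ρ : Matrix (Fin n × Fin m) (Fin n × Fin m) ℂ) :
    (ptr₂ ρ).trace = ρ.trace := by
  simp [trace, ptr₂, Fintype.sum_prod_type]

theorem trace_outer {d : Type} [Fintype d] (ψ : d → ℂ) :
    (outer ψ).trace = ∑ x, (Complex.normSq (ψ x) : ℂ) := by
  simp [trace, outer, Complex.mul_conj]

theorem ptr₂_outer {n m : ℕ} (ψ : Fin n × Fin m → ℂ) :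
    ptr₂ (outer ψ) = of (Function.curry ψ) * (of (Function.curry ψ))ᴴ := by
  ext i j
  simp [ptr₂, outer, mul_apply]

theorem entangled_pure_has_mixed_marginal {n m : ℕ}
    (ψ : Fin n × Fin m → ℂ) (hψ : ∑ x, Complex.normSq (ψ x) = 1)
    (hent : ¬ ∃ (φ₁ : Fin n → ℂ) (φ₂ : Fin m → ℂ), ψ = fun p => φ₁ p.1 * φ₂ p.2) :
    (ptr₂ (outer ψ)) * (ptr₂ (outer ψ)) ≠ ptr₂ (outer ψ) := by
  intro hpure
  set M : Matrix (Fin n) (Fin m) ℂ := of (Function.curry ψ)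
  have htrace : (ptr₂ (outer ψ)).trace = 1 := by
    rw [trace_ptr₂, trace_outer]
    exact_mod_cast hψ
  have hrank : M.rank = 1 := by
    have h := trace_eq_rank_of_isIdempotentElem (A := ptr₂ (outer ψ)) hpure
    rw [htrace, ptr₂_outer, rank_self_mul_conjTranspose] at h
    exact_mod_cast h.symm
  obtain ⟨u, v, huv⟩ := exists_eq_vecMulVec_of_rank_le_one hrank.le
  exact hent ⟨u, v, funext fun p => congrFun (congrFun huv p.1) p.2⟩
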